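/- For the additive bialgebra modality induced by the monoidal coalgebra modality of an additive linear category (with ∇ := (δ ⊗ δ) ; m⊗ ; !(ε ⊗ e + e ⊗ ε) and u := m_K ; !(0)), any natural transformation η : A → !A which satisfies the alternative chain rule [dC.4'] and the monoidal rule [dC.m] also satisfies the chain rule [dC.4]. -/

import Mathlib

open CategoryTheory MonoidalCategory

universe v u

/-- Commutative-monoid enrichment: every hom-set carries a commutative monoid
structure (addition `+` and zero `0`), with no negatives assumed. -/
class HomAddCommMonoid (C : Type u) [Category.{v} C] where
  homAddCommMonoid : ∀ X Y : C, AddCommMonoid (X ⟶ Y)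

attribute [instance] HomAddCommMonoid.homAddCommMonoid

/-- An additive symmetric monoidal category: a symmetric monoidal category whose
hom-sets are commutative monoids, such that composition and the tensor product of
morphisms preserve the addition and the zero in each argument. -/
class AdditiveSymmetricMonoidal (C : Type u) [Category.{v} C] [MonoidalCategory C]
    [SymmetricCategory C] [HomAddCommMonoid C] : Prop where
  add_comp : ∀ {X Y Z : C} (f g : X ⟶ Y) (h : Y ⟶ Z), (f + g) ≫ h = f ≫ h + g ≫ h
  comp_add : ∀ {X Y Z : C} (f : X ⟶ Y) (g h : Y ⟶ Z), f ≫ (g + h) = f ≫ g + f ≫ h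
  zero_comp : ∀ {X Y Z : C} (g : Y ⟶ Z), (0 : X ⟶ Y) ≫ g = 0
  comp_zero : ∀ {X Y Z : C} (f : X ⟶ Y), f ≫ (0 : Y ⟶ Z) = 0
  whiskerLeft_add : ∀ (X : C) {Y Z : C} (f g : Y ⟶ Z), X ◁ (f + g) = X ◁ f + X ◁ g
  add_whiskerRight : ∀ {Y Z : C} (f g : Y ⟶ Z) (X : C), (f + g) ▷ X = f ▷ X + g ▷ X
  whiskerLeft_zero : ∀ (X Y Z : C), X ◁ (0 : Y ⟶ Z) = 0
  zero_whiskerRight : ∀ (Y Z X : C), (0 : Y ⟶ Z) ▷ X = 0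

/-- A coalgebra modality `(!, δ, ε, Δ, e)` on a symmetric monoidal category:
a comonad `(!, δ, ε)` together with natural transformations `Δ : !A ⟶ !A ⊗ !A` and
`e : !A ⟶ 𝟙_ C` making each `(!A, Δ, e)` a cocommutative comonoid, and such that
`δ` preserves the comultiplication. -/
structure CoalgebraModality (C : Type u) [Category.{v} C] [MonoidalCategory C]
    [SymmetricCategory C] where
  obj : C → C
  map : ∀ {A B : C}, (A ⟶ B) → (obj A ⟶ obj B)
  map_id : ∀ A : C, map (𝟙 A) = 𝟙 (obj A)
  map_comp : ∀ {A B D : C} (f : A ⟶ B) (g : B ⟶ D), map (f ≫ g) = map f ≫ map g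
  δ : ∀ A : C, obj A ⟶ obj (obj A)
  ε : ∀ A : C, obj A ⟶ A
  Δ : ∀ A : C, obj A ⟶ obj A ⊗ obj A
  e : ∀ A : C, obj A ⟶ 𝟙_ C
  δ_natural : ∀ {A B : C} (f : A ⟶ B), map f ≫ δ B = δ A ≫ map (map f)
  ε_natural : ∀ {A B : C} (f : A ⟶ B), map f ≫ ε B = ε A ≫ f
  Δ_natural : ∀ {A B : C} (f : A ⟶ B), map f ≫ Δ B = Δ A ≫ (map f ⊗ₘ map f)
  e_natural : ∀ {A B : C} (f : A ⟶ B), map f ≫ e B = e A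
  δ_assoc : ∀ A : C, δ A ≫ δ (obj A) = δ A ≫ map (δ A)
  δ_counit : ∀ A : C, δ A ≫ ε (obj A) = 𝟙 (obj A)
  δ_map_counit : ∀ A : C, δ A ≫ map (ε A) = 𝟙 (obj A)
  comul_assoc : ∀ A : C,
    Δ A ≫ (Δ A ▷ obj A) ≫ (α_ (obj A) (obj A) (obj A)).hom = Δ A ≫ (obj A ◁ Δ A)
  comul_counit : ∀ A : C, Δ A ≫ (e A ▷ obj A) = (λ_ (obj A)).inv
  counit_comul : ∀ A : C, Δ A ≫ (obj A ◁ e A) = (ρ_ (obj A)).inv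
  comul_comm : ∀ A : C, Δ A ≫ (β_ (obj A) (obj A)).hom = Δ A
  δ_comul : ∀ A : C, δ A ≫ Δ (obj A) = Δ A ≫ (δ A ⊗ₘ δ A)

section NonAdditive

variable {C : Type u} [Category.{v} C] [MonoidalCategory C] [SymmetricCategory C]

/-- The middle-four interchange `(X ⊗ Y) ⊗ (Z ⊗ W) ⟶ (X ⊗ Z) ⊗ (Y ⊗ W)`,
that is `1 ⊗ σ ⊗ 1` up to associativity. -/
def mswap (X Y Z W : C) : (X ⊗ Y) ⊗ (Z ⊗ W) ⟶ (X ⊗ Z) ⊗ (Y ⊗ W) :=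
  (α_ X Y (Z ⊗ W)).hom ≫ (X ◁ (α_ Y Z W).inv) ≫ (X ◁ ((β_ Y Z).hom ▷ W)) ≫
    (X ◁ (α_ Z Y W).hom) ≫ (α_ X Z (Y ⊗ W)).inv

/-- The axioms making `(Q, mT, mK)` a monoidal coalgebra modality:
`(!, mT, mK)` is a symmetric monoidal functor, `(!, δ, ε, mT, mK)` is a symmetric
monoidal comonad (`δ` and `ε` are monoidal natural transformations), and `Δ` and `e`
are monoidal natural transformations as well as `!`-coalgebra morphisms. -/
structure IsMonoidalCoalgebraModality (Q : CoalgebraModality C)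
    (mT : ∀ A B : C, Q.obj A ⊗ Q.obj B ⟶ Q.obj (A ⊗ B))
    (mK : 𝟙_ C ⟶ Q.obj (𝟙_ C)) : Prop where
  mT_natural : ∀ {A A' B B' : C} (f : A ⟶ A') (g : B ⟶ B'),
    (Q.map f ⊗ₘ Q.map g) ≫ mT A' B' = mT A B ≫ Q.map (f ⊗ₘ g)
  mT_assoc : ∀ A B D : C,
    (mT A B ▷ Q.obj D) ≫ mT (A ⊗ B) D ≫ Q.map (α_ A B D).hom =
      (α_ (Q.obj A) (Q.obj B) (Q.obj D)).hom ≫ (Q.obj A ◁ mT B D) ≫ mT A (B ⊗ D)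
  mT_left_unit : ∀ A : C,
    (mK ▷ Q.obj A) ≫ mT (𝟙_ C) A ≫ Q.map (λ_ A).hom = (λ_ (Q.obj A)).hom
  mT_right_unit : ∀ A : C,
    (Q.obj A ◁ mK) ≫ mT A (𝟙_ C) ≫ Q.map (ρ_ A).hom = (ρ_ (Q.obj A)).hom
  mT_symm : ∀ A B : C,
    (β_ (Q.obj A) (Q.obj B)).hom ≫ mT B A = mT A B ≫ Q.map (β_ A B).hom
  δ_monoidal : ∀ A B : C, mT A B ≫ Q.δ (A ⊗ B) =
    (Q.δ A ⊗ₘ Q.δ B) ≫ mT (Q.obj A) (Q.obj B) ≫ Q.map (mT A B)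
  δ_monoidal_unit : mK ≫ Q.δ (𝟙_ C) = mK ≫ Q.map mK
  ε_monoidal : ∀ A B : C, mT A B ≫ Q.ε (A ⊗ B) = Q.ε A ⊗ₘ Q.ε B
  ε_monoidal_unit : mK ≫ Q.ε (𝟙_ C) = 𝟙 (𝟙_ C)
  Δ_monoidal : ∀ A B : C, mT A B ≫ Q.Δ (A ⊗ B) =
    (Q.Δ A ⊗ₘ Q.Δ B) ≫ mswap (Q.obj A) (Q.obj A) (Q.obj B) (Q.obj B) ≫ (mT A B ⊗ₘ mT A B)
  Δ_monoidal_unit : mK ≫ Q.Δ (𝟙_ C) = (λ_ (𝟙_ C)).inv ≫ (mK ⊗ₘ mK)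
  e_monoidal : ∀ A B : C, mT A B ≫ Q.e (A ⊗ B) = (Q.e A ⊗ₘ Q.e B) ≫ (λ_ (𝟙_ C)).hom
  e_monoidal_unit : mK ≫ Q.e (𝟙_ C) = 𝟙 (𝟙_ C)
  Δ_coalgebra_morphism : ∀ A : C,
    Q.Δ A ≫ (Q.δ A ⊗ₘ Q.δ A) ≫ mT (Q.obj A) (Q.obj A) = Q.δ A ≫ Q.map (Q.Δ A)
  e_coalgebra_morphism : ∀ A : C, Q.e A ≫ mK = Q.δ A ≫ Q.map (Q.e A)

end NonAdditive

section Additive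

variable {C : Type u} [Category.{v} C] [MonoidalCategory C] [SymmetricCategory C]
  [HomAddCommMonoid C]

/-- The map `ε ⊗ e + e ⊗ ε : !A ⊗ !A ⟶ A`. -/
def CoalgebraModality.phi (Q : CoalgebraModality C) (A : C) :
    Q.obj A ⊗ Q.obj A ⟶ A :=
  (Q.ε A ⊗ₘ Q.e A) ≫ (ρ_ A).hom + (Q.e A ⊗ₘ Q.ε A) ≫ (λ_ A).hom

/-- The axioms making `(Q, mul, unit)` a bialgebra modality: `mul = ∇` and
`unit = u` are natural, each `(!A, ∇, u)` is a commutative monoid, each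
`(!A, ∇, u, Δ, e)` is a bialgebra, and `∇ ; ε = ε ⊗ e + e ⊗ ε`. -/
structure IsBialgebraModality (Q : CoalgebraModality C)
    (mul : ∀ A : C, Q.obj A ⊗ Q.obj A ⟶ Q.obj A)
    (unit : ∀ A : C, 𝟙_ C ⟶ Q.obj A) : Prop where
  mul_natural : ∀ {A B : C} (f : A ⟶ B), (Q.map f ⊗ₘ Q.map f) ≫ mul B = mul A ≫ Q.map f
  unit_natural : ∀ {A B : C} (f : A ⟶ B), unit A ≫ Q.map f = unit B
  mul_assoc : ∀ A : C, (mul A ▷ Q.obj A) ≫ mul A =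
    (α_ (Q.obj A) (Q.obj A) (Q.obj A)).hom ≫ (Q.obj A ◁ mul A) ≫ mul A
  one_mul : ∀ A : C, (unit A ▷ Q.obj A) ≫ mul A = (λ_ (Q.obj A)).hom
  mul_one : ∀ A : C, (Q.obj A ◁ unit A) ≫ mul A = (ρ_ (Q.obj A)).hom
  mul_comm : ∀ A : C, (β_ (Q.obj A) (Q.obj A)).hom ≫ mul A = mul A
  mul_counit : ∀ A : C, mul A ≫ Q.e A = (Q.e A ⊗ₘ Q.e A) ≫ (λ_ (𝟙_ C)).hom
  unit_comul : ∀ A : C, unit A ≫ Q.Δ A = (λ_ (𝟙_ C)).inv ≫ (unit A ⊗ₘ unit A)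
  unit_counit : ∀ A : C, unit A ≫ Q.e A = 𝟙 (𝟙_ C)
  mul_comul : ∀ A : C, mul A ≫ Q.Δ A =
    (Q.Δ A ⊗ₘ Q.Δ A) ≫ mswap (Q.obj A) (Q.obj A) (Q.obj A) (Q.obj A) ≫ (mul A ⊗ₘ mul A)
  mul_counit_eps : ∀ A : C, mul A ≫ Q.ε A = Q.phi A

/-- An additive bialgebra modality: a bialgebra modality compatible with the
additive structure, i.e. `!(f + g) = Δ ; (!f ⊗ !g) ; ∇` and `!(0) = e ; u`. -/
def IsAdditiveBialgebraModality (Q : CoalgebraModality C)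
    (mul : ∀ A : C, Q.obj A ⊗ Q.obj A ⟶ Q.obj A)
    (unit : ∀ A : C, 𝟙_ C ⟶ Q.obj A) : Prop :=
  IsBialgebraModality Q mul unit ∧
    (∀ {A B : C} (f g : A ⟶ B),
      Q.map (f + g) = Q.Δ A ≫ (Q.map f ⊗ₘ Q.map g) ≫ mul B) ∧
    (∀ A B : C, Q.map (0 : A ⟶ B) = Q.e A ≫ unit B)

/-- The multiplication `∇ := (δ ⊗ δ) ; m⊗ ; !(ε ⊗ e + e ⊗ ε)` induced by a
monoidal coalgebra modality. -/
def inducedMul (Q : CoalgebraModality C)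
    (mT : ∀ A B : C, Q.obj A ⊗ Q.obj B ⟶ Q.obj (A ⊗ B)) (A : C) :
    Q.obj A ⊗ Q.obj A ⟶ Q.obj A :=
  (Q.δ A ⊗ₘ Q.δ A) ≫ mT (Q.obj A) (Q.obj A) ≫ Q.map (Q.phi A)

/-- The unit `u := m_K ; !(0)` induced by a monoidal coalgebra modality. -/
def inducedUnit (Q : CoalgebraModality C) (mK : 𝟙_ C ⟶ Q.obj (𝟙_ C)) (A : C) :
    𝟙_ C ⟶ Q.obj A :=
  mK ≫ Q.map (0 : 𝟙_ C ⟶ A)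

/-- The monoidal structure
`m⊗ := (δ ⊗ δ) ; (!(1 ⊗ u) ⊗ !(u ⊗ 1)) ; ∇ ; δ ; !(Δ) ; !(!(ε ⊗ e) ⊗ !(e ⊗ ε)) ; !(ε ⊗ ε)`
induced by an (additive) bialgebra modality. -/
def inducedMT (Q : CoalgebraModality C)
    (mul : ∀ A : C, Q.obj A ⊗ Q.obj A ⟶ Q.obj A)
    (unit : ∀ A : C, 𝟙_ C ⟶ Q.obj A) (A B : C) :
    Q.obj A ⊗ Q.obj B ⟶ Q.obj (A ⊗ B) :=
  (Q.δ A ⊗ₘ Q.δ B) ≫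
    (Q.map ((ρ_ (Q.obj A)).inv ≫ (Q.obj A ◁ unit B)) ⊗ₘ
      Q.map ((λ_ (Q.obj B)).inv ≫ (unit A ▷ Q.obj B))) ≫
    mul (Q.obj A ⊗ Q.obj B) ≫ Q.δ (Q.obj A ⊗ Q.obj B) ≫
    Q.map (Q.Δ (Q.obj A ⊗ Q.obj B)) ≫
    Q.map (Q.map ((Q.ε A ⊗ₘ Q.e B) ≫ (ρ_ A).hom) ⊗ₘ
      Q.map ((Q.e A ⊗ₘ Q.ε B) ≫ (λ_ B).hom)) ≫
    Q.map (Q.ε A ⊗ₘ Q.ε B)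

/-- The unit `m_K := u ; δ ; !(e)` induced by an (additive) bialgebra modality. -/
def inducedMK (Q : CoalgebraModality C) (unit : ∀ A : C, 𝟙_ C ⟶ Q.obj A) :
    𝟙_ C ⟶ Q.obj (𝟙_ C) :=
  unit (𝟙_ C) ≫ Q.δ (𝟙_ C) ≫ Q.map (Q.e (𝟙_ C))

section Rules

variable (Q : CoalgebraModality C)

/-- `d : !A ⊗ A ⟶ !A` is a natural transformation. -/
def DerivNatural (d : ∀ A : C, Q.obj A ⊗ A ⟶ Q.obj A) : Prop :=
  ∀ {A B : C} (f : A ⟶ B), (Q.map f ⊗ₘ f) ≫ d B = d A ≫ Q.map f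

/-- The constant rule [d.1] : `d ; e = 0`. -/
def ConstantRule (d : ∀ A : C, Q.obj A ⊗ A ⟶ Q.obj A) : Prop :=
  ∀ A : C, d A ≫ Q.e A = 0

/-- The Leibniz (product) rule [d.2] :
`d ; Δ = (Δ ⊗ 1) ; ((1 ⊗ d) + (1 ⊗ σ) ; (d ⊗ 1))`. -/
def LeibnizRule (d : ∀ A : C, Q.obj A ⊗ A ⟶ Q.obj A) : Prop :=
  ∀ A : C, d A ≫ Q.Δ A =
    (Q.Δ A ▷ A) ≫
      ((α_ (Q.obj A) (Q.obj A) A).hom ≫ (Q.obj A ◁ d A) +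
        (α_ (Q.obj A) (Q.obj A) A).hom ≫ (Q.obj A ◁ (β_ (Q.obj A) A).hom) ≫
          (α_ (Q.obj A) A (Q.obj A)).inv ≫ (d A ▷ Q.obj A))

/-- The linear rule [d.3] : `d ; ε = e ⊗ 1`. -/
def LinearRule (d : ∀ A : C, Q.obj A ⊗ A ⟶ Q.obj A) : Prop :=
  ∀ A : C, d A ≫ Q.ε A = (Q.e A ▷ A) ≫ (λ_ A).hom

/-- The chain rule [d.4] : `d ; δ = (Δ ⊗ 1) ; (δ ⊗ d) ; d`. -/
def ChainRule (d : ∀ A : C, Q.obj A ⊗ A ⟶ Q.obj A) : Prop :=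
  ∀ A : C, d A ≫ Q.δ A =
    (Q.Δ A ▷ A) ≫ (α_ (Q.obj A) (Q.obj A) A).hom ≫ (Q.δ A ⊗ₘ d A) ≫ d (Q.obj A)

/-- The interchange rule [d.5] : `(1 ⊗ σ) ; (d ⊗ 1) ; d = (d ⊗ 1) ; d`. -/
def InterchangeRule (d : ∀ A : C, Q.obj A ⊗ A ⟶ Q.obj A) : Prop :=
  ∀ A : C,
    (α_ (Q.obj A) A A).hom ≫ (Q.obj A ◁ (β_ A A).hom) ≫ (α_ (Q.obj A) A A).inv ≫
      (d A ▷ A) ≫ d A = (d A ▷ A) ≫ d A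

/-- A deriving transformation: a natural `d : !A ⊗ A ⟶ !A` satisfying
[d.1]–[d.5]. -/
def IsDerivingTransformation (d : ∀ A : C, Q.obj A ⊗ A ⟶ Q.obj A) : Prop :=
  DerivNatural Q d ∧ ConstantRule Q d ∧ LeibnizRule Q d ∧ LinearRule Q d ∧
    ChainRule Q d ∧ InterchangeRule Q d

/-- The ∇-rule [d.∇] : `(∇ ⊗ 1) ; d = (1 ⊗ d) ; ∇`. -/
def NablaRule (mul : ∀ A : C, Q.obj A ⊗ Q.obj A ⟶ Q.obj A)
    (d : ∀ A : C, Q.obj A ⊗ A ⟶ Q.obj A) : Prop :=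
  ∀ A : C, (mul A ▷ A) ≫ d A =
    (α_ (Q.obj A) (Q.obj A) A).hom ≫ (Q.obj A ◁ d A) ≫ mul A

/-- The monoidal rule [d.m] for a deriving transformation :
`(1 ⊗ d) ; m⊗ = (Δ ⊗ 1 ⊗ 1) ; (1 ⊗ σ ⊗ 1) ; (m⊗ ⊗ ε ⊗ 1) ; d`. -/
def DerivMonoidalRule (mT : ∀ A B : C, Q.obj A ⊗ Q.obj B ⟶ Q.obj (A ⊗ B))
    (d : ∀ A : C, Q.obj A ⊗ A ⟶ Q.obj A) : Prop :=
  ∀ A B : C,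
    (α_ (Q.obj A) (Q.obj B) B).hom ≫ (Q.obj A ◁ d B) ≫ mT A B =
      ((Q.Δ A ▷ Q.obj B) ▷ B) ≫ ((α_ (Q.obj A) (Q.obj A) (Q.obj B)).hom ▷ B) ≫
        ((Q.obj A ◁ (β_ (Q.obj A) (Q.obj B)).hom) ▷ B) ≫
        ((α_ (Q.obj A) (Q.obj B) (Q.obj A)).inv ▷ B) ≫
        (α_ (Q.obj A ⊗ Q.obj B) (Q.obj A) B).hom ≫
        (mT A B ⊗ₘ (Q.ε A ▷ B)) ≫ d (A ⊗ B)

/-- `η : A ⟶ !A` is a natural transformation. -/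
def CoderNatural (η : ∀ A : C, A ⟶ Q.obj A) : Prop :=
  ∀ {A B : C} (f : A ⟶ B), f ≫ η B = η A ≫ Q.map f

/-- The constant rule [dC.1] : `η ; e = 0`. -/
def CoderConstantRule (η : ∀ A : C, A ⟶ Q.obj A) : Prop :=
  ∀ A : C, η A ≫ Q.e A = 0

/-- The product rule [dC.2] : `η ; Δ = η ⊗ u + u ⊗ η`. -/
def CoderProductRule (unit : ∀ A : C, 𝟙_ C ⟶ Q.obj A)
    (η : ∀ A : C, A ⟶ Q.obj A) : Prop :=
  ∀ A : C, η A ≫ Q.Δ A =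
    (ρ_ A).inv ≫ (η A ⊗ₘ unit A) + (λ_ A).inv ≫ (unit A ⊗ₘ η A)

/-- The linear rule [dC.3] : `η ; ε = 1`. -/
def CoderLinearRule (η : ∀ A : C, A ⟶ Q.obj A) : Prop :=
  ∀ A : C, η A ≫ Q.ε A = 𝟙 A

/-- The chain rule [dC.4] :
`(1 ⊗ η) ; ∇ ; δ = (Δ ⊗ η) ; (1 ⊗ ∇) ; (δ ⊗ η) ; ∇`. -/
def CoderChainRule (mul : ∀ A : C, Q.obj A ⊗ Q.obj A ⟶ Q.obj A)
    (η : ∀ A : C, A ⟶ Q.obj A) : Prop :=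
  ∀ A : C, (Q.obj A ◁ η A) ≫ mul A ≫ Q.δ A =
    (Q.Δ A ⊗ₘ η A) ≫ (α_ (Q.obj A) (Q.obj A) (Q.obj A)).hom ≫ (Q.obj A ◁ mul A) ≫
      (Q.δ A ⊗ₘ η (Q.obj A)) ≫ mul (Q.obj A)

/-- The alternative chain rule [dC.4'] : `η ; δ = (u ⊗ η) ; (δ ⊗ η) ; ∇`. -/
def CoderAltChainRule (mul : ∀ A : C, Q.obj A ⊗ Q.obj A ⟶ Q.obj A)
    (unit : ∀ A : C, 𝟙_ C ⟶ Q.obj A) (η : ∀ A : C, A ⟶ Q.obj A) : Prop :=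
  ∀ A : C, η A ≫ Q.δ A =
    (λ_ A).inv ≫ (unit A ⊗ₘ η A) ≫ (Q.δ A ⊗ₘ η (Q.obj A)) ≫ mul (Q.obj A)

/-- The monoidal rule [dC.m] : `(1 ⊗ η) ; m⊗ = (ε ⊗ 1) ; η`. -/
def CoderMonoidalRule (mT : ∀ A B : C, Q.obj A ⊗ Q.obj B ⟶ Q.obj (A ⊗ B))
    (η : ∀ A : C, A ⟶ Q.obj A) : Prop :=
  ∀ A B : C, (Q.obj A ◁ η B) ≫ mT A B = (Q.ε A ▷ B) ≫ η (A ⊗ B)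

/-- A codereliction: a natural `η : A ⟶ !A` satisfying [dC.1]–[dC.4]. -/
def IsCodereliction (mul : ∀ A : C, Q.obj A ⊗ Q.obj A ⟶ Q.obj A)
    (unit : ∀ A : C, 𝟙_ C ⟶ Q.obj A) (η : ∀ A : C, A ⟶ Q.obj A) : Prop :=
  CoderNatural Q η ∧ CoderConstantRule Q η ∧ CoderProductRule Q unit η ∧
    CoderLinearRule Q η ∧ CoderChainRule Q mul η

end Rules

end Additive



section AuxChain

variable {C : Type u} [Category.{v} C] [MonoidalCategory C] [SymmetricCategory C]
  [HomAddCommMonoid C] [AdditiveSymmetricMonoidal C]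

open AdditiveSymmetricMonoidal

set_option linter.unusedSectionVars false

theorem aux_mswap_eq_tensorμ (X Y Z W : C) : mswap X Y Z W = tensorμ X Y Z W := rfl

theorem aux_mswap_natural {X Y Z W X' Y' Z' W' : C} (f₁ : X ⟶ X') (f₂ : Y ⟶ Y')
    (f₃ : Z ⟶ Z') (f₄ : W ⟶ W') :
    ((f₁ ⊗ₘ f₂) ⊗ₘ (f₃ ⊗ₘ f₄)) ≫ mswap X' Y' Z' W' =
      mswap X Y Z W ≫ ((f₁ ⊗ₘ f₃) ⊗ₘ (f₂ ⊗ₘ f₄)) := by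
  rw [aux_mswap_eq_tensorμ, aux_mswap_eq_tensorμ, tensorμ_natural]

theorem aux_mswap_mswap (X Y Z W : C) :
    mswap X Y Z W ≫ mswap X Z Y W = 𝟙 _ := by
  have h : tensorμ X Z Y W = tensorδ X Y Z W := by
    dsimp only [tensorμ, tensorδ]
    rw [← SymmetricCategory.braiding_swap_eq_inv_braiding]
  rw [aux_mswap_eq_tensorμ, aux_mswap_eq_tensorμ, h, tensorμ_tensorδ]

theorem aux_Xcoh (X A : C) :
    ((X ⊗ X) ◁ (λ_ A).inv) ≫ mswap X X (𝟙_ C) A ≫ ((ρ_ X).hom ⊗ₘ 𝟙 (X ⊗ A)) =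
      (α_ X X A).hom := by
  dsimp only [mswap]
  rw [braiding_tensorUnit_right]
  monoidal

theorem aux_struct1 (A B : C) :
    ((A ⊗ B) ◁ (λ_ (𝟙_ C)).hom) ≫ (ρ_ (A ⊗ B)).hom =
      mswap A B (𝟙_ C) (𝟙_ C) ≫ ((ρ_ A).hom ⊗ₘ (ρ_ B).hom) := by
  rw [aux_mswap_eq_tensorμ, tensor_right_unitality A B,
    ← MonoidalCategory.whiskerLeft_comp_assoc, Iso.hom_inv_id,
    MonoidalCategory.whiskerLeft_id, Category.id_comp]

theorem aux_struct2 (A B : C) :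
    ((λ_ (𝟙_ C)).hom ▷ (A ⊗ B)) ≫ (λ_ (A ⊗ B)).hom =
      mswap (𝟙_ C) (𝟙_ C) A B ≫ ((λ_ A).hom ⊗ₘ (λ_ B).hom) := by
  rw [aux_mswap_eq_tensorμ, tensor_left_unitality A B,
    ← comp_whiskerRight_assoc, Iso.hom_inv_id, MonoidalCategory.id_whiskerRight,
    Category.id_comp]

theorem aux_zero_tensorHom {X Y Z W : C} (f : Z ⟶ W) :
    ((0 : X ⟶ Y) ⊗ₘ f) = 0 := by
  rw [MonoidalCategory.tensorHom_def, zero_whiskerRight, zero_comp]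

theorem aux_tensorHom_zero {X Y Z W : C} (f : X ⟶ Y) :
    (f ⊗ₘ (0 : Z ⟶ W)) = 0 := by
  rw [MonoidalCategory.tensorHom_def, whiskerLeft_zero, comp_zero]

theorem aux_tensorHom_add {X Y Z W : C} (f : X ⟶ Y) (g h : Z ⟶ W) :
    (f ⊗ₘ (g + h)) = (f ⊗ₘ g) + (f ⊗ₘ h) := by
  rw [MonoidalCategory.tensorHom_def, whiskerLeft_add, comp_add, ← MonoidalCategory.tensorHom_def, ← MonoidalCategory.tensorHom_def]

theorem aux_add_tensorHom {X Y Z W : C} (f g : X ⟶ Y) (h : Z ⟶ W) :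
    ((f + g) ⊗ₘ h) = (f ⊗ₘ h) + (g ⊗ₘ h) := by
  rw [MonoidalCategory.tensorHom_def, add_whiskerRight, add_comp, ← MonoidalCategory.tensorHom_def, ← MonoidalCategory.tensorHom_def]


variable (Q : CoalgebraModality C)
  (mT : ∀ A B : C, Q.obj A ⊗ Q.obj B ⟶ Q.obj (A ⊗ B))
  (mK : 𝟙_ C ⟶ Q.obj (𝟙_ C))

theorem aux_u_e (hM : IsMonoidalCoalgebraModality Q mT mK) (A : C) :
    inducedUnit Q mK A ≫ Q.e A = 𝟙 (𝟙_ C) := by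
  rw [inducedUnit, Category.assoc, Q.e_natural, hM.e_monoidal_unit]

theorem aux_u_eps (A : C) :
    inducedUnit Q mK A ≫ Q.ε A = 0 := by
  rw [inducedUnit, Category.assoc, Q.ε_natural, comp_zero, comp_zero]

theorem aux_δ_e (hM : IsMonoidalCoalgebraModality Q mT mK) (A : C) :
    Q.δ A ≫ Q.e (Q.obj A) = Q.e A := by
  have h : Q.e (Q.obj A) = Q.map (Q.e A) ≫ Q.e (𝟙_ C) := (Q.e_natural (Q.e A)).symm
  rw [h, ← Category.assoc, ← hM.e_coalgebra_morphism, Category.assoc,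
    hM.e_monoidal_unit, Category.comp_id]

theorem aux_u_δ (hM : IsMonoidalCoalgebraModality Q mT mK) (A : C) :
    inducedUnit Q mK A ≫ Q.δ A = mK ≫ Q.map (inducedUnit Q mK A) := by
  rw [inducedUnit, Category.assoc, Q.δ_natural, ← Category.assoc,
    hM.δ_monoidal_unit, Category.assoc, ← Q.map_comp]

theorem aux_mK_mT (hM : IsMonoidalCoalgebraModality Q mT mK) (X : C) :
    (Q.obj X ◁ mK) ≫ mT X (𝟙_ C) = (ρ_ (Q.obj X)).hom ≫ Q.map ((ρ_ X).inv) := by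
  have h := hM.mT_right_unit X
  have h2 : (Q.obj X ◁ mK) ≫ mT X (𝟙_ C) ≫ Q.map (ρ_ X).hom ≫ Q.map (ρ_ X).inv =
      (ρ_ (Q.obj X)).hom ≫ Q.map ((ρ_ X).inv) := by
    rw [← Category.assoc, ← Category.assoc, Category.assoc (Q.obj X ◁ mK), h]
  rw [← h2, ← Q.map_comp (ρ_ X).hom, Iso.hom_inv_id, Q.map_id, Category.comp_id]

theorem aux_uδM (hM : IsMonoidalCoalgebraModality Q mT mK) (A : C) :
    (Q.obj (Q.obj A) ◁ (inducedUnit Q mK A ≫ Q.δ A)) ≫ mT (Q.obj A) (Q.obj A) =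
      (ρ_ (Q.obj (Q.obj A))).hom ≫
        Q.map ((ρ_ (Q.obj A)).inv ≫ (Q.obj A ◁ inducedUnit Q mK A)) := by
  rw [aux_u_δ Q mT mK hM, MonoidalCategory.whiskerLeft_comp, Category.assoc]
  have hn : (Q.obj (Q.obj A) ◁ Q.map (inducedUnit Q mK A)) ≫ mT (Q.obj A) (Q.obj A) =
      mT (Q.obj A) (𝟙_ C) ≫ Q.map (Q.obj A ◁ inducedUnit Q mK A) := by
    rw [← id_tensorHom, ← Q.map_id (Q.obj A),
      hM.mT_natural (𝟙 (Q.obj A)) (inducedUnit Q mK A), id_tensorHom]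
  rw [hn, ← Category.assoc, aux_mK_mT Q mT mK hM, Category.assoc, ← Q.map_comp]

theorem aux_j_phi (hM : IsMonoidalCoalgebraModality Q mT mK) (A : C) :
    ((ρ_ (Q.obj A)).inv ≫ (Q.obj A ◁ inducedUnit Q mK A)) ≫ Q.phi A = Q.ε A := by
  rw [CoalgebraModality.phi, comp_add]
  have h1 : ((ρ_ (Q.obj A)).inv ≫ (Q.obj A ◁ inducedUnit Q mK A)) ≫
      ((Q.ε A ⊗ₘ Q.e A) ≫ (ρ_ A).hom) = Q.ε A := by
    rw [MonoidalCategory.tensorHom_def]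
    simp only [Category.assoc]
    rw [whisker_exchange_assoc, ← MonoidalCategory.whiskerLeft_comp_assoc,
      aux_u_e Q mT mK hM, MonoidalCategory.whiskerLeft_id, Category.id_comp,
      rightUnitor_naturality, Iso.inv_hom_id_assoc]
  have h2 : ((ρ_ (Q.obj A)).inv ≫ (Q.obj A ◁ inducedUnit Q mK A)) ≫
      ((Q.e A ⊗ₘ Q.ε A) ≫ (λ_ A).hom) = 0 := by
    rw [MonoidalCategory.tensorHom_def]
    simp only [Category.assoc]
    rw [whisker_exchange_assoc, ← MonoidalCategory.whiskerLeft_comp_assoc,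
      aux_u_eps Q mK, whiskerLeft_zero, zero_comp, comp_zero, comp_zero]
  rw [h1, h2, add_zero]

theorem aux_mul_one (hM : IsMonoidalCoalgebraModality Q mT mK) (A : C) :
    (Q.obj A ◁ inducedUnit Q mK A) ≫ inducedMul Q mT A = (ρ_ (Q.obj A)).hom := by
  rw [inducedMul, MonoidalCategory.tensorHom_def]
  simp only [Category.assoc]
  rw [whisker_exchange_assoc, ← MonoidalCategory.whiskerLeft_comp_assoc]
  rw [← Category.assoc (Q.obj (Q.obj A) ◁ (inducedUnit Q mK A ≫ Q.δ A)),
    aux_uδM Q mT mK hM]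
  simp only [Category.assoc]
  rw [← Q.map_comp, aux_j_phi Q mT mK hM, rightUnitor_naturality_assoc,
    Q.δ_map_counit, Category.comp_id]

theorem aux_F1 (hM : IsMonoidalCoalgebraModality Q mT mK) (A : C) :
    inducedMul Q mT A ≫ Q.δ A =
      (Q.δ A ⊗ₘ Q.δ A) ≫ mT (Q.obj A) (Q.obj A) ≫ Q.map (inducedMul Q mT A) := by
  rw [inducedMul]
  simp only [Category.assoc]
  rw [Q.δ_natural (Q.phi A)]
  rw [← Category.assoc (mT (Q.obj A) (Q.obj A)), hM.δ_monoidal (Q.obj A) (Q.obj A)]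
  simp only [Category.assoc]
  rw [tensorHom_comp_tensorHom_assoc, Q.δ_assoc, ← tensorHom_comp_tensorHom_assoc]
  rw [reassoc_of% hM.mT_natural (Q.δ A) (Q.δ A)]
  rw [← Q.map_comp, ← Q.map_comp]

theorem aux_phi_nat {A B : C} (f : A ⟶ B) :
    (Q.map f ⊗ₘ Q.map f) ≫ Q.phi B = Q.phi A ≫ f := by
  have l : (Q.map f ⊗ₘ Q.map f) ≫ ((Q.ε B ⊗ₘ Q.e B) ≫ (ρ_ B).hom) =
      ((Q.ε A ≫ f) ⊗ₘ Q.e A) ≫ (ρ_ B).hom := by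
    rw [tensorHom_comp_tensorHom_assoc, Q.ε_natural, Q.e_natural]
  have r : ((Q.ε A ⊗ₘ Q.e A) ≫ (ρ_ A).hom) ≫ f =
      ((Q.ε A ≫ f) ⊗ₘ Q.e A) ≫ (ρ_ B).hom := by
    rw [Category.assoc, ← rightUnitor_naturality, ← tensorHom_id,
      tensorHom_comp_tensorHom_assoc, Category.comp_id]
  have l2 : (Q.map f ⊗ₘ Q.map f) ≫ ((Q.e B ⊗ₘ Q.ε B) ≫ (λ_ B).hom) =
      (Q.e A ⊗ₘ (Q.ε A ≫ f)) ≫ (λ_ B).hom := by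
    rw [tensorHom_comp_tensorHom_assoc, Q.ε_natural, Q.e_natural]
  have r2 : ((Q.e A ⊗ₘ Q.ε A) ≫ (λ_ A).hom) ≫ f =
      (Q.e A ⊗ₘ (Q.ε A ≫ f)) ≫ (λ_ B).hom := by
    rw [Category.assoc, ← leftUnitor_naturality, ← id_tensorHom,
      tensorHom_comp_tensorHom_assoc, Category.comp_id]
  rw [CoalgebraModality.phi, CoalgebraModality.phi, comp_add, add_comp,
    l, r, l2, r2]

theorem aux_nabla_nat (hM : IsMonoidalCoalgebraModality Q mT mK) {A B : C} (f : A ⟶ B) :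
    (Q.map f ⊗ₘ Q.map f) ≫ inducedMul Q mT B = inducedMul Q mT A ≫ Q.map f := by
  rw [inducedMul, inducedMul]
  simp only [Category.assoc]
  rw [tensorHom_comp_tensorHom_assoc, Q.δ_natural f, ← tensorHom_comp_tensorHom_assoc]
  rw [reassoc_of% hM.mT_natural (Q.map f) (Q.map f)]
  rw [← Q.map_comp, aux_phi_nat Q f, Q.map_comp]

theorem aux_mT_left_nat (hM : IsMonoidalCoalgebraModality Q mT mK) (P : C) {X Y : C}
    (h : X ⟶ Y) :
    mT P X ≫ Q.map (P ◁ h) = (Q.obj P ◁ Q.map h) ≫ mT P Y := by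
  have h2 := hM.mT_natural (𝟙 P) h
  rw [Q.map_id, id_tensorHom, id_tensorHom] at h2
  exact h2.symm

theorem aux_mT_right_nat (hM : IsMonoidalCoalgebraModality Q mT mK) (S : C) {X Y : C}
    (g : X ⟶ Y) :
    mT X S ≫ Q.map (g ▷ S) = (Q.map g ▷ Q.obj S) ≫ mT Y S := by
  have h2 := hM.mT_natural g (𝟙 S)
  rw [Q.map_id, tensorHom_id, tensorHom_id] at h2
  exact h2.symm

theorem aux_mT_assoc_inv (hM : IsMonoidalCoalgebraModality Q mT mK) (W Y U : C) :
    (Q.obj W ◁ mT Y U) ≫ mT W (Y ⊗ U) ≫ Q.map (α_ W Y U).inv =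
      (α_ (Q.obj W) (Q.obj Y) (Q.obj U)).inv ≫ (mT W Y ▷ Q.obj U) ≫ mT (W ⊗ Y) U := by
  rw [← cancel_epi (α_ (Q.obj W) (Q.obj Y) (Q.obj U)).hom, ← reassoc_of% hM.mT_assoc W Y U,
    ← Q.map_comp, Iso.hom_inv_id, Q.map_id, Category.comp_id, Iso.hom_inv_id_assoc]

theorem aux_Δφ₁ (A : C) :
    Q.Δ A ≫ ((Q.ε A ⊗ₘ Q.e A) ≫ (ρ_ A).hom) = Q.ε A := by
  rw [MonoidalCategory.tensorHom_def, ← whisker_exchange]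
  simp only [Category.assoc]
  rw [← Category.assoc (Q.Δ A), Q.counit_comul, rightUnitor_naturality,
    Iso.inv_hom_id_assoc]

theorem aux_Δφ₂ (A : C) :
    Q.Δ A ≫ ((Q.e A ⊗ₘ Q.ε A) ≫ (λ_ A).hom) = Q.ε A := by
  rw [MonoidalCategory.tensorHom_def]
  simp only [Category.assoc]
  rw [← Category.assoc (Q.Δ A), Q.comul_counit, leftUnitor_naturality,
    Iso.inv_hom_id_assoc]

theorem aux_chi (hM : IsMonoidalCoalgebraModality Q mT mK) (A B : C) :
    (mT A B ⊗ₘ mT A B) ≫ Q.phi (A ⊗ B) =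
      mswap (Q.obj A) (Q.obj B) (Q.obj A) (Q.obj B) ≫
        ((((Q.ε A ⊗ₘ Q.e A) ≫ (ρ_ A).hom) ⊗ₘ ((Q.ε B ⊗ₘ Q.e B) ≫ (ρ_ B).hom)) +
          (((Q.e A ⊗ₘ Q.ε A) ≫ (λ_ A).hom) ⊗ₘ ((Q.e B ⊗ₘ Q.ε B) ≫ (λ_ B).hom))) := by
  have t1 : (mT A B ⊗ₘ mT A B) ≫ ((Q.ε (A ⊗ B) ⊗ₘ Q.e (A ⊗ B)) ≫ (ρ_ (A ⊗ B)).hom) =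
      mswap (Q.obj A) (Q.obj B) (Q.obj A) (Q.obj B) ≫
        (((Q.ε A ⊗ₘ Q.e A) ≫ (ρ_ A).hom) ⊗ₘ ((Q.ε B ⊗ₘ Q.e B) ≫ (ρ_ B).hom)) := by
    rw [tensorHom_comp_tensorHom_assoc, hM.ε_monoidal, hM.e_monoidal]
    have e1 : ((Q.ε A ⊗ₘ Q.ε B) ⊗ₘ ((Q.e A ⊗ₘ Q.e B) ≫ (λ_ (𝟙_ C)).hom)) ≫ (ρ_ (A ⊗ B)).hom =
        ((Q.ε A ⊗ₘ Q.ε B) ⊗ₘ (Q.e A ⊗ₘ Q.e B)) ≫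
          ((A ⊗ B) ◁ (λ_ (𝟙_ C)).hom) ≫ (ρ_ (A ⊗ B)).hom := by
      rw [← id_tensorHom, tensorHom_comp_tensorHom_assoc, Category.comp_id]
    rw [e1, aux_struct1, ← Category.assoc, aux_mswap_natural, Category.assoc,
      tensorHom_comp_tensorHom]
  have t2 : (mT A B ⊗ₘ mT A B) ≫ ((Q.e (A ⊗ B) ⊗ₘ Q.ε (A ⊗ B)) ≫ (λ_ (A ⊗ B)).hom) =
      mswap (Q.obj A) (Q.obj B) (Q.obj A) (Q.obj B) ≫
        (((Q.e A ⊗ₘ Q.ε A) ≫ (λ_ A).hom) ⊗ₘ ((Q.e B ⊗ₘ Q.ε B) ≫ (λ_ B).hom)) := by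
    rw [tensorHom_comp_tensorHom_assoc, hM.ε_monoidal, hM.e_monoidal]
    have e2 : (((Q.e A ⊗ₘ Q.e B) ≫ (λ_ (𝟙_ C)).hom) ⊗ₘ (Q.ε A ⊗ₘ Q.ε B)) ≫ (λ_ (A ⊗ B)).hom =
        ((Q.e A ⊗ₘ Q.e B) ⊗ₘ (Q.ε A ⊗ₘ Q.ε B)) ≫
          ((λ_ (𝟙_ C)).hom ▷ (A ⊗ B)) ≫ (λ_ (A ⊗ B)).hom := by
      rw [← tensorHom_id, tensorHom_comp_tensorHom_assoc, Category.comp_id]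
    rw [e2, aux_struct2, ← Category.assoc, aux_mswap_natural, Category.assoc,
      tensorHom_comp_tensorHom]
  rw [CoalgebraModality.phi, comp_add, t1, t2, ← comp_add]

theorem aux_R5_inner (hM : IsMonoidalCoalgebraModality Q mT mK) (X Y Z : C) :
    (Q.obj X ◁ mT Y Z) ≫ mT X (Y ⊗ Z) ≫ Q.map (α_ X Y Z).inv ≫
        Q.map ((β_ X Y).hom ▷ Z) ≫ Q.map (α_ Y X Z).hom =
      (α_ (Q.obj X) (Q.obj Y) (Q.obj Z)).inv ≫ ((β_ (Q.obj X) (Q.obj Y)).hom ▷ Q.obj Z) ≫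
        (α_ (Q.obj Y) (Q.obj X) (Q.obj Z)).hom ≫ (Q.obj Y ◁ mT X Z) ≫ mT Y (X ⊗ Z) := by
  rw [reassoc_of% aux_mT_assoc_inv Q mT mK hM X Y Z]
  rw [reassoc_of% aux_mT_right_nat Q mT mK hM Z (β_ X Y).hom]
  rw [← comp_whiskerRight_assoc]
  rw [show mT X Y ≫ Q.map (β_ X Y).hom = (β_ (Q.obj X) (Q.obj Y)).hom ≫ mT Y X from
    (hM.mT_symm X Y).symm]
  rw [comp_whiskerRight_assoc]
  rw [hM.mT_assoc Y X Z]

theorem aux_R5 (hM : IsMonoidalCoalgebraModality Q mT mK) (W X Y Z : C) :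
    (mT W X ⊗ₘ mT Y Z) ≫ mT (W ⊗ X) (Y ⊗ Z) ≫ Q.map (mswap W X Y Z) =
      mswap (Q.obj W) (Q.obj X) (Q.obj Y) (Q.obj Z) ≫ (mT W Y ⊗ₘ mT X Z) ≫
        mT (W ⊗ Y) (X ⊗ Z) := by
  conv_lhs => rw [mswap]
  simp only [Q.map_comp, Category.assoc]
  conv_lhs => rw [MonoidalCategory.tensorHom_def']
  rw [Category.assoc, reassoc_of% hM.mT_assoc W X (Y ⊗ Z)]
  rw [associator_naturality_right_assoc]
  rw [reassoc_of% aux_mT_left_nat Q mT mK hM W (α_ X Y Z).inv]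
  rw [reassoc_of% aux_mT_left_nat Q mT mK hM W ((β_ X Y).hom ▷ Z)]
  rw [reassoc_of% aux_mT_left_nat Q mT mK hM W (α_ Y X Z).hom]
  simp only [← MonoidalCategory.whiskerLeft_comp_assoc]
  rw [aux_R5_inner Q mT mK hM X Y Z]
  simp only [MonoidalCategory.whiskerLeft_comp, Category.assoc]
  rw [aux_mT_assoc_inv Q mT mK hM W Y (X ⊗ Z)]
  rw [associator_inv_naturality_right_assoc]
  rw [mswap]
  simp only [Category.assoc]
  rw [← MonoidalCategory.tensorHom_def'_assoc]

theorem aux_F4 (hM : IsMonoidalCoalgebraModality Q mT mK) (A B : C) :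
    (Q.obj A ◁ inducedMul Q mT B) ≫ mT A B =
      (Q.Δ A ▷ (Q.obj B ⊗ Q.obj B)) ≫ mswap (Q.obj A) (Q.obj A) (Q.obj B) (Q.obj B) ≫
        (mT A B ⊗ₘ mT A B) ≫ inducedMul Q mT (A ⊗ B) := by
  symm
  conv_lhs => rw [inducedMul]
  rw [tensorHom_comp_tensorHom_assoc, hM.δ_monoidal A B]
  rw [← tensorHom_comp_tensorHom, ← tensorHom_comp_tensorHom]
  simp only [Category.assoc]
  rw [← reassoc_of% aux_mswap_natural (Q.δ A) (Q.δ A) (Q.δ B) (Q.δ B)]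
  rw [reassoc_of% hM.mT_natural (mT A B) (mT A B)]
  rw [← Q.map_comp, aux_chi Q mT mK hM A B, Q.map_comp]
  rw [reassoc_of% aux_R5 Q mT mK hM (Q.obj A) (Q.obj B) (Q.obj A) (Q.obj B)]
  rw [reassoc_of% aux_mswap_mswap (Q.obj (Q.obj A)) (Q.obj (Q.obj A)) (Q.obj (Q.obj B))
    (Q.obj (Q.obj B))]
  rw [tensorHom_comp_tensorHom_assoc (Q.δ A ⊗ₘ Q.δ A) (Q.δ B ⊗ₘ Q.δ B)]
  rw [← tensorHom_id (Q.Δ A), tensorHom_comp_tensorHom_assoc, Category.id_comp]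
  rw [show Q.Δ A ≫ (Q.δ A ⊗ₘ Q.δ A) ≫ mT (Q.obj A) (Q.obj A) = Q.δ A ≫ Q.map (Q.Δ A) from
    hM.Δ_coalgebra_morphism A]
  rw [show (Q.δ A ≫ Q.map (Q.Δ A)) ⊗ₘ ((Q.δ B ⊗ₘ Q.δ B) ≫ mT (Q.obj B) (Q.obj B)) =
      (Q.δ A ⊗ₘ ((Q.δ B ⊗ₘ Q.δ B) ≫ mT (Q.obj B) (Q.obj B))) ≫
        (Q.map (Q.Δ A) ⊗ₘ 𝟙 (Q.obj (Q.obj B ⊗ Q.obj B))) from by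
    rw [tensorHom_comp_tensorHom, Category.comp_id]]
  rw [← Q.map_id (Q.obj B ⊗ Q.obj B)]
  simp only [Category.assoc]
  rw [reassoc_of% hM.mT_natural (Q.Δ A) (𝟙 (Q.obj B ⊗ Q.obj B))]
  rw [← Q.map_comp]
  have hsum : (Q.Δ A ⊗ₘ 𝟙 (Q.obj B ⊗ Q.obj B)) ≫
      ((((Q.ε A ⊗ₘ Q.e A) ≫ (ρ_ A).hom) ⊗ₘ ((Q.ε B ⊗ₘ Q.e B) ≫ (ρ_ B).hom)) +
        (((Q.e A ⊗ₘ Q.ε A) ≫ (λ_ A).hom) ⊗ₘ ((Q.e B ⊗ₘ Q.ε B) ≫ (λ_ B).hom))) =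
      Q.ε A ⊗ₘ Q.phi B := by
    rw [comp_add, tensorHom_comp_tensorHom, tensorHom_comp_tensorHom, Category.id_comp, Category.id_comp,
      aux_Δφ₁, aux_Δφ₂, ← aux_tensorHom_add, CoalgebraModality.phi]
  rw [hsum]
  rw [show Q.ε A ⊗ₘ Q.phi B = (Q.ε A ⊗ₘ 𝟙 (Q.obj B ⊗ Q.obj B)) ≫ (𝟙 A ⊗ₘ Q.phi B) from by
    rw [tensorHom_comp_tensorHom, Category.comp_id, Category.id_comp]]
  rw [Q.map_comp]
  rw [← reassoc_of% hM.mT_natural (Q.ε A) (𝟙 (Q.obj B ⊗ Q.obj B)), Q.map_id]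
  rw [tensorHom_comp_tensorHom_assoc, Q.δ_map_counit, Category.comp_id]
  rw [id_tensorHom A (Q.phi B)]
  rw [aux_mT_left_nat Q mT mK hM A (Q.phi B)]
  rw [id_tensorHom, ← MonoidalCategory.whiskerLeft_comp_assoc]
  rw [inducedMul]
  simp only [Category.assoc]

end AuxChain




/-- For the additive bialgebra modality induced by the monoidal coalgebra modality
of an additive linear category, any natural transformation `η : A ⟶ !A` satisfying
the alternative chain rule [dC.4'] and the monoidal rule [dC.m] also satisfies the
chain rule [dC.4]. -/
theorem alt_chain_and_monoidal_imply_chain_rule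
    {C : Type u} [Category.{v} C] [MonoidalCategory C] [SymmetricCategory C]
    [HomAddCommMonoid C] [AdditiveSymmetricMonoidal C]
    (Q : CoalgebraModality C)
    (mT : ∀ A B : C, Q.obj A ⊗ Q.obj B ⟶ Q.obj (A ⊗ B))
    (mK : 𝟙_ C ⟶ Q.obj (𝟙_ C))
    (hM : IsMonoidalCoalgebraModality Q mT mK)
    (η : ∀ A : C, A ⟶ Q.obj A)
    (hnat : CoderNatural Q η)
    (h4' : CoderAltChainRule Q (inducedMul Q mT) (inducedUnit Q mK) η)
    (hm : CoderMonoidalRule Q mT η) :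
    CoderChainRule Q (inducedMul Q mT) η := by
  intro A
  have hj : ((ρ_ (Q.obj A)).inv ≫ (Q.obj A ◁ inducedUnit Q mK A)) ≫ inducedMul Q mT A =
      𝟙 (Q.obj A) := by
    rw [Category.assoc, aux_mul_one Q mT mK hM A, Iso.inv_hom_id]
  have legU : (Q.δ A ⊗ₘ (inducedUnit Q mK A ≫ Q.δ A)) ≫ mT (Q.obj A) (Q.obj A) ≫
      Q.map (inducedMul Q mT A) = (ρ_ (Q.obj A)).hom ≫ Q.δ A := by
    rw [MonoidalCategory.tensorHom_def]
    simp only [Category.assoc]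
    rw [reassoc_of% aux_uδM Q mT mK hM A]
    rw [← Q.map_comp, hj, Q.map_id, Category.comp_id, rightUnitor_naturality]
  have legH : (Q.δ A ⊗ₘ (η A ≫ η (Q.obj A))) ≫ mT (Q.obj A) (Q.obj A) ≫
      Q.map (inducedMul Q mT A) =
      (Q.obj A ◁ η A) ≫ inducedMul Q mT A ≫ η (Q.obj A) := by
    rw [MonoidalCategory.tensorHom_def, MonoidalCategory.whiskerLeft_comp]
    simp only [Category.assoc]
    rw [reassoc_of% hm (Q.obj A) (Q.obj A)]
    rw [whisker_exchange_assoc]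
    rw [← comp_whiskerRight_assoc, Q.δ_counit, MonoidalCategory.id_whiskerRight,
      Category.id_comp]
    rw [← hnat (inducedMul Q mT A)]
  rw [aux_F1 Q mT mK hM A]
  rw [MonoidalCategory.tensorHom_def (Q.δ A) (Q.δ A)]
  simp only [Category.assoc]
  rw [whisker_exchange_assoc]
  rw [← MonoidalCategory.whiskerLeft_comp_assoc]
  rw [h4' A]
  rw [tensorHom_comp_tensorHom_assoc]
  rw [MonoidalCategory.whiskerLeft_comp, MonoidalCategory.whiskerLeft_comp]
  simp only [Category.assoc]
  rw [reassoc_of% aux_F4 Q mT mK hM (Q.obj A) (Q.obj A)]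
  rw [whisker_exchange_assoc]
  rw [whisker_exchange_assoc]
  rw [← comp_whiskerRight_assoc, Q.δ_comul A, comp_whiskerRight_assoc]
  rw [← whisker_exchange_assoc]
  rw [← MonoidalCategory.tensorHom_def_assoc, ← MonoidalCategory.tensorHom_def_assoc]
  rw [reassoc_of% aux_mswap_natural (Q.δ A) (Q.δ A) (inducedUnit Q mK A ≫ Q.δ A)
    (η A ≫ η (Q.obj A))]
  rw [tensorHom_comp_tensorHom_assoc]
  rw [← aux_nabla_nat Q mT mK hM (inducedMul Q mT A)]
  rw [tensorHom_comp_tensorHom_assoc]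
  simp only [Category.assoc]
  rw [legU, legH]
  rw [show ((ρ_ (Q.obj A)).hom ≫ Q.δ A) ⊗ₘ
      ((Q.obj A ◁ η A) ≫ inducedMul Q mT A ≫ η (Q.obj A)) =
      ((ρ_ (Q.obj A)).hom ⊗ₘ 𝟙 (Q.obj A ⊗ A)) ≫
        (Q.δ A ⊗ₘ ((Q.obj A ◁ η A) ≫ inducedMul Q mT A ≫ η (Q.obj A))) from by
    rw [tensorHom_comp_tensorHom, Category.id_comp]]
  rw [MonoidalCategory.tensorHom_def (Q.Δ A) ((λ_ A).inv)]
  simp only [Category.assoc]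
  rw [reassoc_of% aux_Xcoh (Q.obj A) A]
  rw [MonoidalCategory.tensorHom_def (Q.δ A) ((Q.obj A ◁ η A) ≫ inducedMul Q mT A ≫ η (Q.obj A))]
  conv_rhs => rw [MonoidalCategory.tensorHom_def (Q.Δ A) (η A)]
  simp only [Category.assoc]
  conv_rhs => rw [associator_naturality_right_assoc]
  conv_rhs => rw [MonoidalCategory.tensorHom_def (Q.δ A) (η (Q.obj A))]
  simp only [Category.assoc]
  rw [whisker_exchange_assoc]
  simp only [← MonoidalCategory.whiskerLeft_comp_assoc, Category.assoc]
  rw [whisker_exchange_assoc]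
  simp only [← MonoidalCategory.whiskerLeft_comp_assoc, Category.assoc]
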